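/- arXiv:2312.12612 — 3 statements merged into one kernel-verified Lean document; each statement's English description precedes it below -/
import Mathlib

section
/- If h : ℝⁿ → ℝ is continuously differentiable, x : ℝ → ℝⁿ is a differentiable solution of the ODE x' = f(x) + g(x)u(x) with h(x(0)) ≥ 0, and along the trajectory the inequality ⟨∇h(x(t)), f(x(t)) + g(x(t))u(x(t))⟩ ≥ -α·h(x(t)) holds for all t ≥ 0 for some constant α > 0, then h(x(t)) ≥ 0 for all t ≥ 0 (the safe set {x : h(x) ≥ 0} is forward invariant). -/
theorem stmt_0 {n m : ℕ}
    (h : EuclideanSpace ℝ (Fin n) → ℝ) (hh : ContDiff ℝ 1 h)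
    (f : EuclideanSpace ℝ (Fin n) → EuclideanSpace ℝ (Fin n))
    (g : EuclideanSpace ℝ (Fin n) → (EuclideanSpace ℝ (Fin m) →L[ℝ] EuclideanSpace ℝ (Fin n)))
    (u : EuclideanSpace ℝ (Fin n) → EuclideanSpace ℝ (Fin m))
    (x : ℝ → EuclideanSpace ℝ (Fin n))
    (hx : ∀ t : ℝ, HasDerivAt x (f (x t) + g (x t) (u (x t))) t)
    (α : ℝ) (hα : 0 < α)
    (h0 : h (x 0) ≥ 0)
    (hineq : ∀ t ≥ (0:ℝ),
      (inner ℝ (gradient h (x t)) (f (x t) + g (x t) (u (x t))) : ℝ) ≥ -α * h (x t)) :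
    ∀ t ≥ (0:ℝ), h (x t) ≥ 0 := by
  -- derivative of φ t = h (x t)
  set v : ℝ → EuclideanSpace ℝ (Fin n) := fun t => f (x t) + g (x t) (u (x t)) with hv
  have hφ : ∀ t : ℝ, HasDerivAt (fun t => h (x t))
      ((inner ℝ (gradient h (x t)) (v t) : ℝ)) t := by
    intro t
    have hdh : HasFDerivAt h (fderiv ℝ h (x t)) (x t) :=
      (hh.differentiable one_ne_zero (x t)).hasFDerivAt
    have := hdh.comp_hasDerivAt t (hx t)
    have hg : (inner ℝ (gradient h (x t)) (v t) : ℝ) = fderiv ℝ h (x t) (v t) := by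
      simp [gradient, InnerProductSpace.toDual_symm_apply]
    rw [hg]
    exact this
  -- ψ t = h (x t) * exp (α t) is monotone on [0, ∞)
  set ψ : ℝ → ℝ := fun t => h (x t) * Real.exp (α * t) with hψdef
  have hψ : ∀ t : ℝ, HasDerivAt ψ
      (((inner ℝ (gradient h (x t)) (v t) : ℝ)) * Real.exp (α * t)
        + h (x t) * (α * Real.exp (α * t))) t := by
    intro t
    have he : HasDerivAt (fun t => Real.exp (α * t)) (α * Real.exp (α * t)) t := by
      have := (Real.hasDerivAt_exp (α * t)).comp t ((hasDerivAt_id t).const_mul α)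
      simpa [mul_comm, Function.comp_def] using this
    exact (hφ t).mul he
  have hmono : MonotoneOn ψ (Set.Ici (0:ℝ)) := by
    apply monotoneOn_of_deriv_nonneg (convex_Ici 0)
    · exact fun t _ => ((hψ t).continuousAt).continuousWithinAt
    · intro t ht
      exact ((hψ t).differentiableAt).differentiableWithinAt
    · intro t ht
      rw [interior_Ici] at ht
      rw [(hψ t).deriv]
      have h1 := hineq t (le_of_lt ht)
      have h2 : Real.exp (α * t) > 0 := Real.exp_pos _
      nlinarith [h1, h2]
  intro t ht
  have := hmono (Set.self_mem_Ici) (Set.mem_Ici.mpr ht) ht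
  have hψ0 : ψ 0 = h (x 0) := by simp [hψdef]
  have h2 : Real.exp (α * t) > 0 := Real.exp_pos _
  rw [hψ0] at this
  have : 0 ≤ ψ t := le_trans h0 this
  simp only [hψdef] at this
  nlinarith [this, h2]
end

section
/- Let y : ℝ → ℝ be differentiable with y(0) ≥ 0 and y'(t) ≥ -α(y(t)) for all t ≥ 0, where α : ℝ → ℝ is continuous, strictly increasing, and α(0) = 0. Then y(t) ≥ 0 for all t ≥ 0. -/
/-! If `y` ever became negative, then after the last time `s` it was nonnegative we would have
`y < 0`, hence `y' ≥ -α(y) > 0`, so `y` would be nondecreasing from `y s ≥ 0`: a contradiction. -/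

open Set

theorem image_nonneg_of_deriv_nonneg_of_neg {y : ℝ → ℝ} {a b : ℝ}
    (hyc : ContinuousOn y (Icc a b)) (hyd : DifferentiableOn ℝ y (Ioo a b)) (ha : 0 ≤ y a)
    (hderiv : ∀ x ∈ Ioo a b, y x < 0 → 0 ≤ deriv y x) : ∀ ⦃t⦄, t ∈ Icc a b → 0 ≤ y t := by
  intro t ht
  by_contra! hyt
  have hsub : Icc a t ⊆ Icc a b := Icc_subset_Icc_right ht.2
  have hcompact : IsCompact (Icc a t ∩ y ⁻¹' Ici 0) :=
    isCompact_Icc.of_isClosed_subset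
      ((hyc.mono hsub).preimage_isClosed_of_isClosed isClosed_Icc isClosed_Ici) inter_subset_left
  obtain ⟨s, ⟨hs, hys⟩, hlast⟩ :=
    hcompact.exists_isGreatest ⟨a, left_mem_Icc.2 ht.1, mem_Ici.2 ha⟩
  have hneg : ∀ x ∈ Ioo s t, y x < 0 := fun x hx =>
    not_le.1 fun hyx => (hx.1.trans_le (hlast ⟨⟨hs.1.trans hx.1.le, hx.2.le⟩, hyx⟩)).false
  have hIoo : Ioo s t ⊆ Ioo a b := Ioo_subset_Ioo hs.1 ht.2
  have hmono : MonotoneOn y (Icc s t) := by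
    refine monotoneOn_of_deriv_nonneg (convex_Icc s t)
      (hyc.mono ((Icc_subset_Icc_left hs.1).trans hsub)) ?_ ?_ <;> rw [interior_Icc]
    · exact hyd.mono hIoo
    · exact fun x hx => hderiv x (hIoo hx) (hneg x hx)
  have : y s ≤ y t := hmono (left_mem_Icc.2 hs.2) (right_mem_Icc.2 hs.2) hs.2
  exact (hys.trans this).not_gt hyt

theorem stmt_1_general (y : ℝ → ℝ) (hy : Differentiable ℝ y) (h0 : y 0 ≥ 0)
    (α : ℝ → ℝ) (hαm : StrictMono α) (hα0 : α 0 = 0)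
    (hineq : ∀ t ≥ (0:ℝ), deriv y t ≥ -α (y t)) :
    ∀ t ≥ (0:ℝ), y t ≥ 0 := by
  intro t ht
  refine image_nonneg_of_deriv_nonneg_of_neg hy.continuous.continuousOn hy.differentiableOn h0
    (fun x hx hyx => ?_) ⟨ht, le_rfl⟩
  have hαneg : α (y x) < 0 := hα0 ▸ hαm hyx
  linarith [hineq x hx.1.le]

theorem stmt_1 (y : ℝ → ℝ) (hy : Differentiable ℝ y) (h0 : y 0 ≥ 0)
    (α : ℝ → ℝ) (hαc : Continuous α) (hαm : StrictMono α) (hα0 : α 0 = 0)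
    (hineq : ∀ t ≥ (0:ℝ), deriv y t ≥ -α (y t)) :
    ∀ t ≥ (0:ℝ), y t ≥ 0 :=
  stmt_1_general y hy h0 α hαm hα0 hineq
end

section
/- For constants π, β, ρ, r > 0, the function V(x) = λ̄x + λ̄²r²/(4ρ), with λ̄ = (√((ρ+β)² + r²π) - (ρ+β))/(r²/2), satisfies the equation ρV(x) = πx - (u*)² + V'(x)(-βx + r·u*·√(1-x)) for all x ∈ [0,1], where u*(x) = V'(x)·r·√(1-x)/2 (note V''(x) = 0 so the second-order diffusion term vanishes). -/
theorem stmt_8 (p β ρ r : ℝ) (hp : 0 < p) (hβ : 0 < β) (hρ : 0 < ρ) (hr : 0 < r) :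
    ∀ x ∈ Set.Icc (0:ℝ) 1,
      let lam := (Real.sqrt ((ρ + β)^2 + r^2 * p) - (ρ + β)) / (r^2 / 2)
      let V : ℝ → ℝ := fun ξ => lam * ξ + lam^2 * r^2 / (4 * ρ)
      let ustar := lam * r * Real.sqrt (1 - x) / 2
      ρ * V x = p * x - ustar^2 + lam * (-β * x + r * ustar * Real.sqrt (1 - x)) := by
  intro x hx
  obtain ⟨hx0, hx1⟩ := hx
  intro lam V ustar
  have hs : Real.sqrt (1 - x) ^ 2 = 1 - x := Real.sq_sqrt (by linarith)
  have ht : Real.sqrt ((ρ + β)^2 + r^2 * p) ^ 2 = (ρ + β)^2 + r^2 * p :=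
    Real.sq_sqrt (by nlinarith)
  simp only [lam, V, ustar]
  set s := Real.sqrt (1 - x) with hsdef
  set t := Real.sqrt ((ρ + β)^2 + r^2 * p) with htdef
  have hr2 : (r:ℝ)^2 ≠ 0 := by positivity
  have hρ' : ρ ≠ 0 := ne_of_gt hρ
  have hx2 : x = 1 - s^2 := by rw [hs]; ring
  have hp2 : p = (t^2 - (ρ + β)^2) / r^2 := by rw [ht]; field_simp; ring
  rw [hx2, hp2]
  field_simp
  ring
end
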